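/- Let S = (ψ, A, B) be a strategy on H_A ⊗ H_B with reduced density matrices ρ_A, ρ_B, and let ν be a probability distribution on the question set X. Define δ = dsync(S;ν) = 1 − E_{x∼ν} Σ_a ⟨ψ, (A^x_a ⊗ B^x_a)ψ⟩, δ_A = 1 − E_{x∼ν} Σ_a Tr(A^x_a ρ_A^{1/2} A^x_a ρ_A^{1/2}), and δ_B = 1 − E_{x∼ν} Σ_a Tr(B^x_a ρ_B^{1/2} B^x_a ρ_B^{1/2}) (δ_A and δ_B are the asynchronicities of the associated symmetric strategies, by Ando's formula). Then: (i) 1 − δ ≤ √(1 − δ_A)·√(1 − δ_B); (ii) δ_A ≤ 2δ; and (iii) δ_B ≤ 2δ. -/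

import Mathlib

open scoped BigOperators Kronecker ComplexOrder
open Matrix

noncomputable section

abbrev Op (n : ℕ) := Matrix (Fin n) (Fin n) ℂ

def inn {I : Type*} [Fintype I] (v w : I → ℂ) : ℂ := ∑ i, star (v i) * w i

def nrm {I : Type*} [Fintype I] (v : I → ℂ) : ℝ := Real.sqrt (inn v v).re

def IsPOVM {n m : ℕ} (A : Fin m → Op n) : Prop :=
  (∀ a, (A a).PosSemidef) ∧ (∑ a, A a) = 1

def IsPVM {n m : ℕ} (A : Fin m → Op n) : Prop :=
  (∀ a, (A a).IsHermitian ∧ A a * A a = A a) ∧ (∑ a, A a) = 1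

structure Game (q m : ℕ) where
  nu : Fin q → Fin q → ℝ
  nu_nonneg : ∀ x y, 0 ≤ nu x y
  nu_sum : (∑ x, ∑ y, nu x y) = 1
  D : Fin m → Fin m → Fin q → Fin q → Bool

structure Strategy (q m nA nB : ℕ) where
  psi : Fin nA × Fin nB → ℂ
  psi_unit : inn psi psi = 1
  A : Fin q → Fin m → Op nA
  B : Fin q → Fin m → Op nB
  A_povm : ∀ x, IsPOVM (A x)
  B_povm : ∀ y, IsPOVM (B y)

def corrRaw {q m nA nB : ℕ} (psi : Fin nA × Fin nB → ℂ)
    (A : Fin q → Fin m → Op nA) (B : Fin q → Fin m → Op nB)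
    (x y : Fin q) (a b : Fin m) : ℂ :=
  inn psi ((A x a ⊗ₖ B y b).mulVec psi)

def Strategy.corr {q m nA nB : ℕ} (S : Strategy q m nA nB) :
    Fin q → Fin q → Fin m → Fin m → ℂ :=
  corrRaw S.psi S.A S.B

def winProbRaw {q m nA nB : ℕ} (G : Game q m) (psi : Fin nA × Fin nB → ℂ)
    (A : Fin q → Fin m → Op nA) (B : Fin q → Fin m → Op nB) : ℝ :=
  ∑ x, ∑ y, G.nu x y *
    ∑ a, ∑ b, (if G.D a b x y then (1:ℝ) else 0) * (corrRaw psi A B x y a b).re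

def winProb {q m nA nB : ℕ} (G : Game q m) (S : Strategy q m nA nB) : ℝ :=
  winProbRaw G S.psi S.A S.B

def qval {q m : ℕ} (G : Game q m) : ℝ :=
  sSup {w : ℝ | ∃ (nA nB : ℕ) (S : Strategy q m nA nB), winProb G S = w}

def margA {q : ℕ} (nu : Fin q → Fin q → ℝ) (x : Fin q) : ℝ := ∑ y, nu x y
def margB {q : ℕ} (nu : Fin q → Fin q → ℝ) (y : Fin q) : ℝ := ∑ x, nu x y

def dsyncRaw {q m nA nB : ℕ} (psi : Fin nA × Fin nB → ℂ)
    (A : Fin q → Fin m → Op nA) (B : Fin q → Fin m → Op nB) (mu : Fin q → ℝ) : ℝ :=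
  1 - ∑ x, mu x * ∑ a, (corrRaw psi A B x x a a).re

def Strategy.dsync {q m nA nB : ℕ} (S : Strategy q m nA nB) (mu : Fin q → ℝ) : ℝ :=
  dsyncRaw S.psi S.A S.B mu

def Game.Symm {q m : ℕ} (G : Game q m) : Prop :=
  (∀ x y, G.nu x y = G.nu y x) ∧ ∀ a b x y, G.D a b x y = G.D b a y x

def Game.Synchronous {q m : ℕ} (G : Game q m) : Prop :=
  G.Symm ∧ (∀ x, 0 < G.nu x x) ∧ ∀ x a b, a ≠ b → G.D a b x x = false

def Game.BetaSync {q m : ℕ} (G : Game q m) (β : ℝ) : Prop :=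
  G.Synchronous ∧ ∀ x, β * ∑ y, G.nu x y ≤ G.nu x x

def Game.Perfect {q m : ℕ} (G : Game q m) : Prop :=
  ∃ (nA nB : ℕ) (S : Strategy q m nA nB), winProb G S = 1

def IsPME {q m n : ℕ} (S : Strategy q m n n) : Prop :=
  (∀ x, IsPVM (S.A x)) ∧
  ∃ U : Op n, Uᴴ * U = 1 ∧
    (∀ p, S.psi p = ((Real.sqrt n)⁻¹ : ℂ) * ∑ i, U p.1 i * U p.2 i) ∧
    (∀ x a, S.B x a = U * (Uᴴ * S.A x a * U)ᵀ * Uᴴ)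

def dilTarget {nA nB kA kB : ℕ} (psi : Fin nA × Fin nB → ℂ)
    (aux : Fin kA × Fin kB → ℂ) :
    (Fin nA × Fin kA) × (Fin nB × Fin kB) → ℂ :=
  fun p => psi (p.1.1, p.2.1) * aux (p.1.2, p.2.2)

def DilIneqs {q m nA nB tA tB kA kB : ℕ}
    (S : Strategy q m nA nB) (T : Strategy q m tA tB)
    (VA : Matrix (Fin tA × Fin kA) (Fin nA) ℂ)
    (VB : Matrix (Fin tB × Fin kB) (Fin nB) ℂ)
    (aux : Fin kA × Fin kB → ℂ) (ε : ℝ) (mu : Fin q → Fin q → ℝ) : Prop :=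
  nrm (fun p => (VA ⊗ₖ VB).mulVec S.psi p - dilTarget T.psi aux p) ≤ ε ∧
  Real.sqrt (∑ x, margA mu x * ∑ a,
    (nrm (fun p => (VA ⊗ₖ VB).mulVec ((S.A x a ⊗ₖ (1 : Op nB)).mulVec S.psi) p
      - dilTarget ((T.A x a ⊗ₖ (1 : Op tB)).mulVec T.psi) aux p)) ^ 2) ≤ ε ∧
  Real.sqrt (∑ y, margB mu y * ∑ b,
    (nrm (fun p => (VA ⊗ₖ VB).mulVec (((1 : Op nA) ⊗ₖ S.B y b).mulVec S.psi) p
      - dilTarget (((1 : Op tA) ⊗ₖ T.B y b).mulVec T.psi) aux p)) ^ 2) ≤ ε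

def LocalDilation {q m nA nB tA tB : ℕ}
    (S : Strategy q m nA nB) (T : Strategy q m tA tB) (ε : ℝ)
    (mu : Fin q → Fin q → ℝ) : Prop :=
  ∃ (kA kB : ℕ) (VA : Matrix (Fin tA × Fin kA) (Fin nA) ℂ)
    (VB : Matrix (Fin tB × Fin kB) (Fin nB) ℂ) (aux : Fin kA × Fin kB → ℂ),
    VAᴴ * VA = 1 ∧ VBᴴ * VB = 1 ∧ inn aux aux = 1 ∧ DilIneqs S T VA VB aux ε mu

def SelfTestsPME {q m tA tB : ℕ} (G : Game q m) (T : Strategy q m tA tB)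
    (κ : ℝ → ℝ) (nuh : Fin q → Fin q → ℝ) : Prop :=
  ∀ ε : ℝ, 0 ≤ ε → ∀ (n : ℕ) (S : Strategy q m n n), IsPME S →
    qval G - ε ≤ winProb G S → LocalDilation S T (κ ε) nuh

def SelfTestsAll {q m tA tB : ℕ} (G : Game q m) (T : Strategy q m tA tB)
    (κ : ℝ → ℝ) (nuh : Fin q → Fin q → ℝ) : Prop :=
  ∀ ε : ℝ, 0 ≤ ε → ∀ (nA nB : ℕ) (S : Strategy q m nA nB),
    qval G - ε ≤ winProb G S → LocalDilation S T (κ ε) nuh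

def SelfTestsClass {q m tA tB : ℕ} (G : Game q m) (T : Strategy q m tA tB)
    (κ : ℝ → ℝ) (nuh : Fin q → Fin q → ℝ)
    (Cl : ∀ nA nB : ℕ, Strategy q m nA nB → Prop) : Prop :=
  ∀ ε : ℝ, 0 ≤ ε → ∀ (nA nB : ℕ) (S : Strategy q m nA nB), Cl nA nB S →
    qval G - ε ≤ winProb G S → LocalDilation S T (κ ε) nuh

def gamePoly {q m nA nB : ℕ} (G : Game q m) (S : Strategy q m nA nB) :
    Matrix (Fin nA × Fin nB) (Fin nA × Fin nB) ℂ :=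
  ∑ x, ∑ y, ∑ a, ∑ b,
    (((G.nu x y : ℝ) : ℂ) * (if G.D a b x y then 1 else 0)) • (S.A x a ⊗ₖ S.B y b)

def specGap {I : Type*} [Fintype I] [DecidableEq I] (M : Matrix I I ℂ) : ℝ :=
  if h : M.IsHermitian then
    (((Finset.univ.val.map h.eigenvalues).sort (· ≤ ·)).getD (Fintype.card I - 1) 0) -
    (((Finset.univ.val.map h.eigenvalues).sort (· ≤ ·)).getD (Fintype.card I - 2) 0)
  else 0

def rhoA {nA nB : ℕ} (psi : Fin nA × Fin nB → ℂ) : Op nA :=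
  Matrix.of fun i j => ∑ k, psi (i, k) * star (psi (j, k))

def rhoB {nA nB : ℕ} (psi : Fin nA × Fin nB → ℂ) : Op nB :=
  Matrix.of fun i j => ∑ k, psi (k, i) * star (psi (k, j))

def IsMaxEntG {I J : Type*} [Fintype I] [DecidableEq I] [Fintype J] (psi : I × J → ℂ) : Prop :=
  Fintype.card I = Fintype.card J ∧
  ∃ (e : I → I → ℂ) (f : I → J → ℂ),
    (∀ i j, inn (e i) (e j) = if i = j then 1 else 0) ∧
    (∀ i j, inn (f i) (f j) = if i = j then 1 else 0) ∧
    ∀ p, psi p = ((Real.sqrt (Fintype.card I))⁻¹ : ℂ) * ∑ i, e i p.1 * f i p.2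

def IsMaxEntIn {kA kB : ℕ} (v : Fin kA × Fin kB → ℂ) : Prop :=
  ∃ (d : ℕ), 0 < d ∧ ∃ (e : Fin d → Fin kA → ℂ) (f : Fin d → Fin kB → ℂ),
    (∀ i j, inn (e i) (e j) = if i = j then 1 else 0) ∧
    (∀ i j, inn (f i) (f j) = if i = j then 1 else 0) ∧
    ∀ p, v p = ((Real.sqrt d)⁻¹ : ℂ) * ∑ i, e i p.1 * f i p.2

def hsNorm {n : ℕ} (M : Op n) : ℝ := Real.sqrt (Mᴴ * M).trace.re

/-- The square root `Matrix.PosSemidef.sqrt` of the older Mathlib, with its old definition. -/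
def posSemidefSqrtOld {n : ℕ} {M : Op n} (hA : M.PosSemidef) : Op n :=
  (hA.1.eigenvectorUnitary : Op n) * diagonal ((↑) ∘ (√·) ∘ hA.1.eigenvalues) *
    (star hA.1.eigenvectorUnitary : Op n)

def traceNorm {n : ℕ} (M : Op n) : ℝ :=
  (posSemidefSqrtOld (Matrix.posSemidef_conjTranspose_mul_self M)).trace.re


/-!
Write `ψ` as the matrix `M` with `ρ_A = M Mᴴ` and `ρ_Bᵀ = Mᴴ M`. The polar decomposition of `M`
gives `W` with `M = s_A W` and `Mᴴ W = s_Bᵀ`, so that Bob's operators become the operators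
`V = W Bᵀ Wᴴ` on Alice's side. For the positive semidefinite form
`⟨F, G⟩ = E_ν ∑ₐ Re tr(Fᴴ s_A G s_A)` one then has `⟨A, V⟩ = 1 - δ`, `⟨A, A⟩ = 1 - δ_A` and
`⟨V, V⟩ = 1 - δ_B`. Cauchy–Schwarz gives (i), and `2⟨A, V⟩ ≤ ⟨A, A⟩ + ⟨V, V⟩` gives
`δ_A + δ_B ≤ 2δ`, hence (ii) and (iii) because `δ_A, δ_B ≥ 0`: for a POVM,
`tr(A s A s) ≤ tr(A s²)` summed over the outcomes is at most `tr(s²) = 1`.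
-/

open scoped MatrixOrder InnerProductSpace

section Bipartite

variable {nA nB : ℕ}

def stateMatrix (psi : Fin nA × Fin nB → ℂ) : Matrix (Fin nA) (Fin nB) ℂ :=
  Matrix.of fun i k => psi (i, k)

lemma rhoA_eq_stateMatrix_mul_conjTranspose (psi : Fin nA × Fin nB → ℂ) :
    rhoA psi = stateMatrix psi * (stateMatrix psi)ᴴ := by
  ext i j
  simp [rhoA, stateMatrix, mul_apply]

lemma transpose_rhoB_eq_conjTranspose_stateMatrix_mul (psi : Fin nA × Fin nB → ℂ) :
    (rhoB psi)ᵀ = (stateMatrix psi)ᴴ * stateMatrix psi := by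
  ext i j
  simp [rhoB, stateMatrix, mul_apply, mul_comm]

lemma trace_rhoA (psi : Fin nA × Fin nB → ℂ) : (rhoA psi).trace = inn psi psi := by
  simp [rhoA, trace, inn, Fintype.sum_prod_type, mul_comm]

lemma trace_rhoB (psi : Fin nA × Fin nB → ℂ) : (rhoB psi).trace = inn psi psi := by
  rw [← trace_transpose, transpose_rhoB_eq_conjTranspose_stateMatrix_mul, trace_mul_comm,
    ← rhoA_eq_stateMatrix_mul_conjTranspose, trace_rhoA]

lemma inn_kronecker_mulVec (psi : Fin nA × Fin nB → ℂ) (A : Op nA) (B : Op nB) :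
    inn psi ((A ⊗ₖ B) *ᵥ psi) = ((stateMatrix psi)ᴴ * A * stateMatrix psi * Bᵀ).trace := by
  change star (vec (stateMatrix psi)ᵀ) ⬝ᵥ ((A ⊗ₖ B) *ᵥ vec (stateMatrix psi)ᵀ) = _
  rw [kronecker_mulVec_vec, star_vec_dotProduct_vec, ← trace_transpose]
  simp only [transpose_mul, conjTranspose_transpose, transpose_transpose]
  rw [trace_mul_comm, ← conjTranspose]
  simp only [Matrix.mul_assoc]

end Bipartite

section PseudoInverse

variable {n p : Type*} [Fintype n] [DecidableEq n] [Fintype p] [DecidableEq p]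

/-- Since `0⁻¹ = 0` in `ℝ`, `cfc (·⁻¹) s` is the Moore–Penrose inverse of `s`. -/
lemma Matrix.PosSemidef.mul_cfc_inv_mul_self {s : Matrix n n ℂ} (hs : s.PosSemidef) :
    s * cfc (fun x : ℝ => x⁻¹) s * s = s := by
  have : ContinuousOn (fun x : ℝ => x⁻¹) (spectrum ℝ s) := s.finite_real_spectrum.continuousOn _
  calc s * cfc (fun x : ℝ => x⁻¹) s * s = cfc (fun x : ℝ => x * x⁻¹ * x) s := by
        rw [cfc_mul _ _ s, cfc_mul _ _ s, cfc_id' ℝ s]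
    _ = s := by simp only [mul_inv_mul_cancel, cfc_id' ℝ s]

lemma Matrix.PosSemidef.cfc_inv {s : Matrix n n ℂ} (hs : s.PosSemidef) :
    (cfc (fun x : ℝ => x⁻¹) s).PosSemidef := by
  rw [← nonneg_iff_posSemidef]
  exact cfc_nonneg fun x hx => inv_nonneg.2 (spectrum_nonneg_of_nonneg hs.nonneg hx)

/-- The polar decomposition of `M`: the witness is `W = s⁺ M`. -/
lemma exists_mul_eq_and_conjTranspose_mul_eq {M : Matrix n p ℂ} {s : Matrix n n ℂ}
    {t : Matrix p p ℂ} (hs : s.PosSemidef) (ht : t.PosSemidef) (hss : s * s = M * Mᴴ)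
    (htt : t * t = Mᴴ * M) : ∃ W : Matrix n p ℂ, s * W = M ∧ Mᴴ * W = t := by
  set g := cfc (fun x : ℝ => x⁻¹) s
  have hg : g.PosSemidef := hs.cfc_inv
  have hsgM : s * g * M = M := by
    have hker : (s * g - 1) * s = 0 := by
      rw [Matrix.sub_mul, hs.mul_cfc_inv_mul_self, Matrix.one_mul, sub_self]
    rw [← sub_eq_zero, ← self_mul_conjTranspose_eq_zero]
    have hfac : s * g * M - M = (s * g - 1) * M := by rw [Matrix.sub_mul, Matrix.one_mul]
    calc (s * g * M - M) * (s * g * M - M)ᴴ = (s * g - 1) * (M * Mᴴ) * (s * g - 1)ᴴ := by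
          rw [hfac, conjTranspose_mul]; simp only [Matrix.mul_assoc]
      _ = (s * g - 1) * s * (s * (s * g - 1)ᴴ) := by rw [← hss]; simp only [Matrix.mul_assoc]
      _ = 0 := by rw [hker, Matrix.zero_mul]
  refine ⟨g * M, by rw [← Matrix.mul_assoc, hsgM], ?_⟩
  have hMgs : Mᴴ * g * s = Mᴴ := by
    simpa [conjTranspose_mul, hs.1.eq, hg.1.eq, Matrix.mul_assoc] using
      congrArg conjTranspose hsgM
  have hpsd : (Mᴴ * (g * M)).PosSemidef := by
    simpa [Matrix.mul_assoc] using hg.conjTranspose_mul_mul_same M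
  refine (CFC.sq_eq_sq_iff _ _ hpsd.nonneg ht.nonneg).1 ?_
  calc (Mᴴ * (g * M)) ^ 2 = Mᴴ * g * (M * Mᴴ) * (g * M) := by simp only [sq, Matrix.mul_assoc]
    _ = (Mᴴ * g * s) * (s * g * M) := by rw [← hss]; simp only [Matrix.mul_assoc]
    _ = t ^ 2 := by rw [hMgs, hsgM, sq, htt]

end PseudoInverse

section TraceInequalities

variable {n : Type*} [Fintype n] [DecidableEq n]

lemma Matrix.PosSemidef.trace_mul_nonneg {P Q : Matrix n n ℂ} (hP : P.PosSemidef)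
    (hQ : Q.PosSemidef) : 0 ≤ (P * Q).trace := by
  set r := CFC.sqrt Q
  have hr : rᴴ = r := (nonneg_iff_posSemidef.1 (CFC.sqrt_nonneg Q)).1.eq
  have hrPr : (r * P * r).PosSemidef := by simpa [hr] using hP.conjTranspose_mul_mul_same r
  rw [← CFC.sqrt_mul_sqrt_self Q hQ.nonneg, ← Matrix.mul_assoc, trace_mul_comm,
    ← Matrix.mul_assoc]
  exact hrPr.trace_nonneg

lemma sum_re_trace_mul_mul_mul_le {m : Type*} [Fintype m] {A : m → Matrix n n ℂ}
    (hA : ∀ a, (A a).PosSemidef) (hsum : ∑ a, A a = 1) {s : Matrix n n ℂ} (hs : s.PosSemidef) :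
    ∑ a, (A a * s * A a * s).trace.re ≤ (s * s).trace.re := by
  have hle : ∀ a, (1 - A a).PosSemidef := fun a => by
    rw [← le_iff, ← hsum]
    exact Finset.single_le_sum (fun b _ => (hA b).nonneg) (Finset.mem_univ a)
  calc ∑ a, (A a * s * A a * s).trace.re ≤ ∑ a, (A a * s * s).trace.re := by
        refine Finset.sum_le_sum fun a _ => ?_
        have h := (hA a).trace_mul_nonneg ((hle a).conjTranspose_mul_mul_same s)
        rw [hs.1.eq] at h
        have hexp : A a * (s * (1 - A a) * s) = A a * s * s - A a * s * A a * s := by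
          noncomm_ring
        rw [hexp, trace_sub, Complex.nonneg_iff] at h
        simpa using h.1
    _ = (s * s).trace.re := by
        rw [← Complex.re_sum, ← trace_sum, ← Finset.sum_mul, ← Finset.sum_mul, hsum,
          Matrix.one_mul]

lemma sum_mul_sum_re_trace_le_one {ι κ : Type*} [Fintype ι] [Fintype κ]
    {nu : ι → ℝ} (hnu : ∀ x, 0 ≤ nu x) (hsum : ∑ x, nu x = 1)
    {A : ι → κ → Matrix n n ℂ} (hA : ∀ x a, (A x a).PosSemidef) (hA1 : ∀ x, ∑ a, A x a = 1)
    {s : Matrix n n ℂ} (hs : s.PosSemidef) (hss : (s * s).trace = 1) :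
    ∑ x, nu x * ∑ a, (A x a * s * A x a * s).trace.re ≤ 1 := by
  calc ∑ x, nu x * ∑ a, (A x a * s * A x a * s).trace.re ≤ ∑ x, nu x * 1 := by
        gcongr with x
        · exact hnu x
        · simpa [hss] using sum_re_trace_mul_mul_mul_le (hA x) (hA1 x) hs
    _ = 1 := by simp [hsum]

end TraceInequalities

section AndoForm

lemma re_inner_sqrt_mul_sqrt_mul {c : ℝ} (hc : 0 ≤ c) (z w : ℂ) :
    RCLike.re ⟪(√c : ℂ) * z, (√c : ℂ) * w⟫_ℂ = c * (star z * w).re := by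
  have h : ⟪(√c : ℂ) * z, (√c : ℂ) * w⟫_ℂ = ((√c * √c : ℝ) : ℂ) * (star z * w) := by
    rw [RCLike.inner_apply, map_mul (starRingEnd ℂ), Complex.conj_ofReal]
    push_cast
    simp only [RCLike.star_def]
    ring
  rw [h, RCLike.re_to_complex, Real.mul_self_sqrt hc, Complex.re_ofReal_mul]

variable {ι κ n : Type*} [Fintype ι] [Fintype κ] [Fintype n] [DecidableEq n]

/-- By Ando's formula, `andoForm nu s A A` is the synchronous correlation of the symmetric
strategy `A` on the canonical purification of `s ^ 2`. -/
def andoForm (nu : ι → ℝ) (s : Matrix n n ℂ) (F G : ι → κ → Matrix n n ℂ) : ℝ :=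
  ∑ x, nu x * ∑ a, ((F x a)ᴴ * s * G x a * s).trace.re

def sandwichVec (nu : ι → ℝ) (s : Matrix n n ℂ) (F : ι → κ → Matrix n n ℂ) :
    EuclideanSpace ℂ (ι × κ × (n × n)) :=
  WithLp.toLp 2 fun p => (√(nu p.1) : ℂ) * vec (CFC.sqrt s * F p.1 p.2.1 * CFC.sqrt s) p.2.2

variable {nu : ι → ℝ} {s : Matrix n n ℂ}

lemma andoForm_eq_re_inner (hnu : ∀ x, 0 ≤ nu x) (hs : s.PosSemidef)
    (F G : ι → κ → Matrix n n ℂ) :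
    andoForm nu s F G = RCLike.re ⟪sandwichVec nu s F, sandwichVec nu s G⟫_ℂ := by
  simp only [andoForm, sandwichVec]
  set r := CFC.sqrt s
  have hr : rᴴ = r := (nonneg_iff_posSemidef.1 (CFC.sqrt_nonneg s)).1.eq
  have hrr : r * r = s := CFC.sqrt_mul_sqrt_self s hs.nonneg
  have htrace (X Y : Matrix n n ℂ) :
      (Xᴴ * s * Y * s).trace = star (vec (r * X * r)) ⬝ᵥ vec (r * Y * r) :=
    calc (Xᴴ * s * Y * s).trace = (r * (Xᴴ * r * r * Y * r)).trace := by
          rw [trace_mul_comm r, ← hrr]; simp only [Matrix.mul_assoc]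
      _ = star (vec (r * X * r)) ⬝ᵥ vec (r * Y * r) := by
          rw [star_vec_dotProduct_vec]; simp only [conjTranspose_mul, hr, Matrix.mul_assoc]
  simp only [PiLp.inner_apply, htrace, Fintype.sum_prod_type, dotProduct, Finset.mul_sum,
    Complex.re_sum, map_sum, re_inner_sqrt_mul_sqrt_mul (hnu _)]
  rfl

lemma andoForm_self_eq_norm_sq (hnu : ∀ x, 0 ≤ nu x) (hs : s.PosSemidef)
    (F : ι → κ → Matrix n n ℂ) : andoForm nu s F F = ‖sandwichVec nu s F‖ ^ 2 := by
  rw [andoForm_eq_re_inner hnu hs, inner_self_eq_norm_sq]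

lemma andoForm_le_sqrt_mul_sqrt (hnu : ∀ x, 0 ≤ nu x) (hs : s.PosSemidef)
    (F G : ι → κ → Matrix n n ℂ) :
    andoForm nu s F G ≤ √(andoForm nu s F F) * √(andoForm nu s G G) := by
  rw [andoForm_self_eq_norm_sq hnu hs, andoForm_self_eq_norm_sq hnu hs,
    Real.sqrt_sq (norm_nonneg _), Real.sqrt_sq (norm_nonneg _), andoForm_eq_re_inner hnu hs]
  exact re_inner_le_norm (𝕜 := ℂ) _ _

lemma two_mul_andoForm_le_add (hnu : ∀ x, 0 ≤ nu x) (hs : s.PosSemidef)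
    (F G : ι → κ → Matrix n n ℂ) :
    2 * andoForm nu s F G ≤ andoForm nu s F F + andoForm nu s G G := by
  rw [andoForm_self_eq_norm_sq hnu hs, andoForm_self_eq_norm_sq hnu hs,
    andoForm_eq_re_inner hnu hs]
  linarith [re_inner_le_norm (𝕜 := ℂ) (sandwichVec nu s F) (sandwichVec nu s G),
    two_mul_le_add_sq ‖sandwichVec nu s F‖ ‖sandwichVec nu s G‖]

end AndoForm

section Sandwich

variable {n p : Type*} [Fintype n] {s : Matrix n n ℂ} {W M : Matrix n p ℂ}

lemma conjTranspose_mul_of_mul_eq (hs : sᴴ = s) (hsW : s * W = M) : Wᴴ * s = Mᴴ := by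
  rw [← hs, ← conjTranspose_mul, hsW]

variable [Fintype p]

lemma trace_mul_sandwich (hs : sᴴ = s) (hsW : s * W = M) (A : Matrix n n ℂ)
    (B : Matrix p p ℂ) : (A * s * (W * B * Wᴴ) * s).trace = (Mᴴ * A * M * B).trace := by
  calc (A * s * (W * B * Wᴴ) * s).trace = (A * (s * W) * B * (Wᴴ * s)).trace := by
        simp only [Matrix.mul_assoc]
    _ = (Mᴴ * A * M * B).trace := by
        rw [hsW, conjTranspose_mul_of_mul_eq hs hsW, trace_mul_comm]
        simp only [Matrix.mul_assoc]

lemma trace_sandwich_mul_sandwich {t : Matrix p p ℂ} (hs : sᴴ = s) (hsW : s * W = M)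
    (hMW : Mᴴ * W = t) (B : Matrix p p ℂ) :
    ((W * B * Wᴴ) * s * (W * B * Wᴴ) * s).trace = (B * t * B * t).trace := by
  calc ((W * B * Wᴴ) * s * (W * B * Wᴴ) * s).trace
        = (W * (B * (Wᴴ * s * W) * B * (Wᴴ * s))).trace := by simp only [Matrix.mul_assoc]
    _ = (B * t * B * t).trace := by
        rw [conjTranspose_mul_of_mul_eq hs hsW, hMW, trace_mul_comm, ← hMW]
        simp only [Matrix.mul_assoc]

end Sandwich

lemma trace_transpose_mul_mul_mul {n R : Type*} [Fintype n] [CommSemiring R]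
    (A B : Matrix n n R) : (Aᵀ * Bᵀ * Aᵀ * Bᵀ).trace = (A * B * A * B).trace := by
  rw [← transpose_mul, ← transpose_mul, ← transpose_mul, trace_transpose, trace_mul_comm]
  simp only [Matrix.mul_assoc]

lemma Strategy.one_sub_dsync {q m nA nB : ℕ} (S : Strategy q m nA nB) (nu : Fin q → ℝ) :
    1 - S.dsync nu = ∑ x, nu x * ∑ a,
      ((stateMatrix S.psi)ᴴ * S.A x a * stateMatrix S.psi * (S.B x a)ᵀ).trace.re := by
  simp only [Strategy.dsync, dsyncRaw, corrRaw, inn_kronecker_mulVec, sub_sub_cancel]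

/-- asynchronicity of a strategy versus the asynchronicities of
its associated symmetric strategies (computed via Ando's formula). -/
theorem stmt8 {q m nA nB : ℕ} (S : Strategy q m nA nB)
    (nu : Fin q → ℝ) (hnn : ∀ x, 0 ≤ nu x) (hsum : (∑ x, nu x) = 1)
    (sA : Op nA) (hsA : sA.PosSemidef) (hsA2 : sA * sA = rhoA S.psi)
    (sB : Op nB) (hsB : sB.PosSemidef) (hsB2 : sB * sB = rhoB S.psi)
    (dA dB : ℝ)
    (hdA : dA = 1 - ∑ x, nu x * ∑ a, ((S.A x a * sA * S.A x a * sA).trace).re)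
    (hdB : dB = 1 - ∑ x, nu x * ∑ a, ((S.B x a * sB * S.B x a * sB).trace).re) :
    1 - S.dsync nu ≤ Real.sqrt (1 - dA) * Real.sqrt (1 - dB) ∧
    dA ≤ 2 * S.dsync nu ∧ dB ≤ 2 * S.dsync nu := by
  obtain ⟨W, hsW, hMW⟩ := exists_mul_eq_and_conjTranspose_mul_eq hsA hsB.transpose
    (hsA2.trans (rhoA_eq_stateMatrix_mul_conjTranspose S.psi))
    (by rw [← transpose_mul, hsB2, transpose_rhoB_eq_conjTranspose_stateMatrix_mul])
  set V : Fin q → Fin m → Op nA := fun x a => W * (S.B x a)ᵀ * Wᴴ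
  have hAH x a : (S.A x a)ᴴ = S.A x a := ((S.A_povm x).1 a).1.eq
  have hVH x a : (V x a)ᴴ = V x a := by
    simp only [V, conjTranspose_mul, conjTranspose_conjTranspose, Matrix.mul_assoc,
      ((S.B_povm x).1 a).1.transpose.eq]
  have hAV : andoForm nu sA S.A V = 1 - S.dsync nu := by
    simp only [andoForm, hAH, V, trace_mul_sandwich hsA.1.eq hsW, S.one_sub_dsync]
  have hAA : andoForm nu sA S.A S.A = 1 - dA := by
    simp only [andoForm, hAH, hdA, sub_sub_cancel]
  have hVV : andoForm nu sA V V = 1 - dB := by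
    simp only [andoForm, hVH, V, trace_sandwich_mul_sandwich hsA.1.eq hsW hMW,
      trace_transpose_mul_mul_mul, hdB, sub_sub_cancel]
  have hdA0 : 0 ≤ dA := hdA ▸ sub_nonneg.2 (sum_mul_sum_re_trace_le_one hnn hsum
    (fun x => (S.A_povm x).1) (fun x => (S.A_povm x).2) hsA
    (by rw [hsA2, trace_rhoA, S.psi_unit]))
  have hdB0 : 0 ≤ dB := hdB ▸ sub_nonneg.2 (sum_mul_sum_re_trace_le_one hnn hsum
    (fun x => (S.B_povm x).1) (fun x => (S.B_povm x).2) hsB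
    (by rw [hsB2, trace_rhoB, S.psi_unit]))
  have hCS := andoForm_le_sqrt_mul_sqrt hnn hsA S.A V
  have hAM := two_mul_andoForm_le_add hnn hsA S.A V
  rw [hAV, hAA, hVV] at hCS hAM
  exact ⟨hCS, by linarith, by linarith⟩
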